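/- arXiv:1412.7640 — 5 statements merged into one kernel-verified Lean document; each statement's English description precedes it below -/
import Mathlib

section
/- Let (a_n)_{n ≥ 1} be a sequence of nonnegative real numbers and set Ã_n = (1/n) ∑_{k=1}^n a_k. Assume there exist C > 0 and m > 1 such that for every n ≥ 1, ∑_{k=1}^n a_k^m ≤ C · n · Ã_n^m. Then for every real s with 1 ≤ s ≤ m and every n ≥ 1, ∑_{k=1}^n a_k^s ≤ C^{m(s-1)/(s(m-1))} · n · Ã_n^s. -/
/-!
Write `s = (1 - θ) · 1 + θ · m` with `θ = (s - 1)/(m - 1)`. Hölder's inequality interpolates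
`∑ a_k^s ≤ (∑ a_k)^(1-θ) (∑ a_k^m)^θ`, and inserting the hypothesis gives the bound with the
sharper constant `C^θ`. Unless all `a_k` vanish, the power mean inequality
`Ã_n^m ≤ (1/n) ∑ a_k^m` forces `C ≥ 1`, and `θ ≤ mθ/s` since `s ≤ m`.
-/

open Finset Real

variable {ι : Type*} (S : Finset ι) {f : ι → ℝ}

theorem sum_rpow_le_rpow_sum_mul_rpow_sum_rpow (hf : ∀ i, 0 ≤ f i) {s m : ℝ} (hm : 1 < m)
    (hs : 1 ≤ s) (hsm : s ≤ m) :
    ∑ i ∈ S, f i ^ s ≤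
      (∑ i ∈ S, f i) ^ ((m - s) / (m - 1)) * (∑ i ∈ S, f i ^ m) ^ ((s - 1) / (m - 1)) := by
  have hm1 : m - 1 ≠ 0 := (sub_pos.2 hm).ne'
  rcases hs.eq_or_lt with rfl | hs
  · simp [div_self hm1]
  have hs1 : s - 1 ≠ 0 := (sub_pos.2 hs).ne'
  have hp : 1 ≤ (m - 1) / (s - 1) := by rw [one_le_div (sub_pos.2 hs)]; linarith
  have self_mul_rpow_sub_one : ∀ i, ∀ t ≠ (0 : ℝ), f i * f i ^ (t - 1) = f i ^ t := fun i t ht ↦ by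
    rw [← rpow_one_add' (hf i) (by simpa using ht), add_sub_cancel]
  convert inner_le_weight_mul_Lp_of_nonneg S hp f (fun i ↦ f i ^ (s - 1)) hf
    (fun i ↦ rpow_nonneg (hf i) _) using 3 with i
  · exact (self_mul_rpow_sub_one i s (by linarith)).symm
  · field_simp; ring
  · refine sum_congr rfl fun i _ ↦ ?_
    rw [← rpow_mul (hf i), mul_div_cancel₀ _ hs1, self_mul_rpow_sub_one i m (by linarith)]
  · field_simp

theorem one_le_const_of_sum_rpow_le (hf : ∀ i, 0 ≤ f i) {C m : ℝ} (hm : 1 ≤ m)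
    (hpos : 0 < ∑ i ∈ S, f i)
    (h : ∑ i ∈ S, f i ^ m ≤ C * #S * ((∑ i ∈ S, f i) / #S) ^ m) : 1 ≤ C := by
  set T := ∑ i ∈ S, f i
  have hn : (0 : ℝ) < #S := by
    exact_mod_cast card_pos.2 (nonempty_of_sum_ne_zero hpos.ne')
  have hcancel : (#S : ℝ) ^ (m - 1) * (C * #S * (T / #S) ^ m) = C * T ^ m := by
    rw [div_rpow hpos.le hn.le, rpow_sub_one hn.ne']
    field_simp
  have hTC : T ^ m ≤ C * T ^ m := calc
    T ^ m ≤ (#S : ℝ) ^ (m - 1) * ∑ i ∈ S, f i ^ m :=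
      rpow_sum_le_const_mul_sum_rpow_of_nonneg S hm fun i _ ↦ hf i
    _ ≤ (#S : ℝ) ^ (m - 1) * (C * #S * (T / #S) ^ m) := by gcongr
    _ = C * T ^ m := hcancel
  exact le_of_mul_le_mul_right (by rwa [one_mul]) (rpow_pos_of_pos hpos m)

theorem sum_rpow_le_of_sum_rpow_le (hS : S.Nonempty) (hf : ∀ i, 0 ≤ f i) {C m s : ℝ}
    (hC : 0 ≤ C) (hm : 1 < m) (hs : 1 ≤ s) (hsm : s ≤ m)
    (h : ∑ i ∈ S, f i ^ m ≤ C * #S * ((∑ i ∈ S, f i) / #S) ^ m) :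
    ∑ i ∈ S, f i ^ s ≤ C ^ ((s - 1) / (m - 1)) * #S * ((∑ i ∈ S, f i) / #S) ^ s := by
  set n : ℝ := (#S : ℝ)
  set A := (∑ i ∈ S, f i) / n
  set θ := (s - 1) / (m - 1) with hθdef
  have hn : 0 < n := Nat.cast_pos.2 hS.card_pos
  have hA : 0 ≤ A := div_nonneg (sum_nonneg fun i _ ↦ hf i) hn.le
  have hsum : ∑ i ∈ S, f i = n * A := (mul_div_cancel₀ _ hn.ne').symm
  clear_value n A
  have hm1 : m - 1 ≠ 0 := by linarith
  have hweight : (m - s) / (m - 1) = 1 - θ := by rw [hθdef]; field_simp; ring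
  have hexp : 1 - θ + m * θ = s := by rw [hθdef]; field_simp; ring
  calc ∑ i ∈ S, f i ^ s
      ≤ (∑ i ∈ S, f i) ^ (1 - θ) * (∑ i ∈ S, f i ^ m) ^ θ := by
        simpa only [hweight] using sum_rpow_le_rpow_sum_mul_rpow_sum_rpow S hf hm hs hsm
    _ ≤ (n * A) ^ (1 - θ) * (C * n * A ^ m) ^ θ := by
        rw [hsum]; gcongr; exact sum_nonneg fun i _ ↦ rpow_nonneg (hf i) m
    _ = C ^ θ * (n ^ (1 - θ) * n ^ θ) * (A ^ (1 - θ) * A ^ (m * θ)) := by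
        rw [mul_rpow hn.le hA, mul_rpow (by positivity) (by positivity), mul_rpow hC hn.le,
          ← rpow_mul hA]
        ring
    _ = C ^ θ * n * A ^ s := by
        rw [← rpow_add hn, sub_add_cancel, rpow_one, ← rpow_add' hA (by linarith), hexp]

theorem power_sum_interpolation_general (a : ℕ → ℝ) (ha : ∀ n, 0 ≤ a n)
    (C m : ℝ) (hm : 1 < m)
    (h : ∀ n : ℕ, 1 ≤ n →
      ∑ k ∈ Finset.Icc 1 n, a k ^ m ≤
        C * n * ((∑ k ∈ Finset.Icc 1 n, a k) / n) ^ m) :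
    ∀ s : ℝ, 1 ≤ s → s ≤ m → ∀ n : ℕ, 1 ≤ n →
      ∑ k ∈ Finset.Icc 1 n, a k ^ s ≤
        C ^ (m * (s - 1) / (s * (m - 1))) * n * ((∑ k ∈ Finset.Icc 1 n, a k) / n) ^ s := by
  intro s hs hsm n hn
  have hcard : (#(Icc 1 n) : ℝ) = n := by simp
  have hmean := h n hn
  rw [← hcard] at hmean ⊢
  rcases (sum_nonneg fun k _ ↦ ha k : 0 ≤ ∑ k ∈ Icc 1 n, a k).eq_or_lt with hT | hT
  · have hzero : ∀ k ∈ Icc 1 n, a k = 0 := (sum_eq_zero_iff_of_nonneg fun k _ ↦ ha k).1 hT.symm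
    have hs0 : s ≠ 0 := by linarith
    rw [sum_eq_zero fun k hk ↦ by rw [hzero k hk, zero_rpow hs0], ← hT, zero_div, zero_rpow hs0,
      mul_zero]
  have hC : 1 ≤ C := one_le_const_of_sum_rpow_le _ ha hm.le hT hmean
  have hexponent : (s - 1) / (m - 1) ≤ m * (s - 1) / (s * (m - 1)) := calc
    _ ≤ (s - 1) / (m - 1) * (m / s) :=
      le_mul_of_one_le_right (div_nonneg (by linarith) (by linarith))
        ((one_le_div (by linarith)).2 hsm)
    _ = _ := by rw [div_mul_div_comm, mul_comm (s - 1), mul_comm (m - 1)]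
  calc ∑ k ∈ Icc 1 n, a k ^ s
      ≤ C ^ ((s - 1) / (m - 1)) * #(Icc 1 n) * ((∑ k ∈ Icc 1 n, a k) / #(Icc 1 n)) ^ s :=
        sum_rpow_le_of_sum_rpow_le _ ⟨1, by simpa⟩ ha (by linarith) hm hs hsm hmean
    _ ≤ _ := by gcongr

/-- If `∑_{k=1}^n a_k^m ≤ C n Ã_n^m` for some `m > 1`, then for every `1 ≤ s ≤ m`,
`∑_{k=1}^n a_k^s ≤ C^{m(s-1)/(s(m-1))} n Ã_n^s`. -/
theorem power_sum_interpolation (a : ℕ → ℝ) (ha : ∀ n, 0 ≤ a n)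
    (C m : ℝ) (hC : 0 < C) (hm : 1 < m)
    (h : ∀ n : ℕ, 1 ≤ n →
      ∑ k ∈ Finset.Icc 1 n, a k ^ m ≤
        C * n * ((∑ k ∈ Finset.Icc 1 n, a k) / n) ^ m) :
    ∀ s : ℝ, 1 ≤ s → s ≤ m → ∀ n : ℕ, 1 ≤ n →
      ∑ k ∈ Finset.Icc 1 n, a k ^ s ≤
        C ^ (m * (s - 1) / (s * (m - 1))) * n * ((∑ k ∈ Finset.Icc 1 n, a k) / n) ^ s :=
  power_sum_interpolation_general a ha C m hm h
end

section
/- Let a : ℕ → [0,∞) be a nonnegative arithmetical function with summatory function A(x) = ∑_{n ≤ x} a(n), and assume A(x) ~ x^α L(x) as x → ∞ for some α > 0 and some positive, non-decreasing, slowly varying function L (i.e. L(Kx)/L(x) → 1 as x → ∞ for every K > 0). Let b : ℕ → ℝ be an arithmetical function with ∑_{n ≥ 1} |b(n)|/n^α < ∞. Then lim_{n→∞} (1/A(n)) ∑_{k=1}^n (b * a)(k) = ∑_{m=1}^∞ b(m)/m^α, where (b * a)(k) = ∑_{d | k} b(d) a(k/d) is the Dirichlet convolution. -/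
/-!
Swapping the order of summation turns the quotient into `∑_d b(d) A(⌊n/d⌋) / A(n)`. Since
`A(x) ~ x^α L(x)` with `L` slowly varying, `A(⌊n/d⌋) / A(n) → d^(-α)` for each fixed `d`; since `L`
is non-decreasing, `A(⌊n/d⌋) / A(n) ≤ C d^(-α)` uniformly in `d` once `n` is large. Tannery's
theorem (dominated convergence for series) then gives the limit `∑_d b(d) d^(-α)`.
-/

open Filter Finset Topology Asymptotics

theorem sum_Icc_sum_divisors_mul {R : Type*} [Semiring R] (f g : ℕ → R) (N : ℕ) :
    ∑ k ∈ Icc 1 N, ∑ d ∈ k.divisors, f d * g (k / d) =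
      ∑ d ∈ Icc 1 N, f d * ∑ q ∈ Icc 1 (N / d), g q := by
  -- `f` and `g` become arithmetic functions by forcing the value `0` at `0`, never used here.
  let F : ArithmeticFunction R := ⟨fun n => if n = 0 then 0 else f n, if_pos rfl⟩
  let G : ArithmeticFunction R := ⟨fun n => if n = 0 then 0 else g n, if_pos rfl⟩
  have hF : ∀ n, 0 < n → F n = f n := fun n hn => if_neg hn.ne'
  have hG : ∀ n, 0 < n → G n = g n := fun n hn => if_neg hn.ne'
  have h := ArithmeticFunction.sum_Ioc_mul_eq_sum_sum F G N
  simp only [← Icc_add_one_left_eq_Ioc, zero_add] at h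
  convert h using 1 <;> refine sum_congr rfl fun k hk => ?_
  · rw [ArithmeticFunction.mul_apply, Nat.sum_divisorsAntidiagonal (F · * G ·)]
    refine sum_congr rfl fun d hd => ?_
    have hd0 := Nat.pos_of_mem_divisors hd
    rw [hF d hd0, hG _ (Nat.div_pos (Nat.divisor_le hd) hd0)]
  · rw [hF k (mem_Icc.1 hk).1]
    exact congrArg _ (sum_congr rfl fun q hq => (hG q (mem_Icc.1 hq).1).symm)

theorem sum_Icc_eq_tsum_add_one {M : Type*} [AddCommMonoid M] [TopologicalSpace M] (f : ℕ → M)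
    {n : ℕ} (hf : ∀ d, n < d → f d = 0) : ∑ d ∈ Icc 1 n, f d = ∑' m, f (m + 1) := by
  rw [tsum_eq_sum (s := range n) fun m hm => hf _ (by simpa using hm), range_eq_Ico,
    sum_Ico_add', zero_add, Ico_add_one_right_eq_Icc]

def SlowlyVarying (L : ℝ → ℝ) : Prop :=
  ∀ K : ℝ, 0 < K → Tendsto (fun x : ℝ => L (K * x) / L x) atTop (𝓝 1)

namespace SlowlyVarying

variable {L : ℝ → ℝ} {ι : Type*} {l : Filter ι} {u v : ι → ℝ} {c : ℝ}

theorem tendsto_div_of_tendsto_div (hL : SlowlyVarying L) (hLpos : ∀ x, 0 ≤ x → 0 < L x)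
    (hLmono : MonotoneOn L (Set.Ici 0)) (hv : Tendsto v l atTop) (hc : 0 < c)
    (huv : Tendsto (fun i => u i / v i) l (𝓝 c)) :
    Tendsto (fun i => L (u i) / L (v i)) l (𝓝 1) := by
  have hratio {x y z : ℝ} (hx : 0 ≤ x) (hxy : x ≤ y) (hz : 0 ≤ z) : L x / L z ≤ L y / L z :=
    div_le_div_of_nonneg_right (hLmono hx (hx.trans hxy) hxy) (hLpos z hz).le
  have hv0 : ∀ᶠ i in l, 0 < v i := hv.eventually_gt_atTop 0
  have hbetween : ∀ᶠ i in l, c / 2 * v i < u i ∧ u i < 2 * c * v i := by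
    filter_upwards [hv0, huv.eventually (Ioo_mem_nhds (by linarith : c / 2 < c)
      (by linarith : c < 2 * c))] with i hvi hi
    exact ⟨(lt_div_iff₀ hvi).1 hi.1, (div_lt_iff₀ hvi).1 hi.2⟩
  refine tendsto_of_tendsto_of_tendsto_of_le_of_le' ((hL (c / 2) (by positivity)).comp hv)
    ((hL (2 * c) (by positivity)).comp hv) ?_ ?_ <;>
    filter_upwards [hv0, hbetween] with i hvi hi
  · exact hratio (by positivity) hi.1.le hvi.le
  · exact hratio (by linarith) hi.2.le hvi.le

theorem tendsto_rpow_mul_div (hL : SlowlyVarying L) (hLpos : ∀ x, 0 ≤ x → 0 < L x)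
    (hLmono : MonotoneOn L (Set.Ici 0)) (α : ℝ) (hv : Tendsto v l atTop) (hc : 0 < c)
    (huv : Tendsto (fun i => u i / v i) l (𝓝 c)) :
    Tendsto (fun i => u i ^ α * L (u i) / (v i ^ α * L (v i))) l (𝓝 (c ^ α)) := by
  have hprod := (huv.rpow_const (p := α) (Or.inl hc.ne')).mul
    (hL.tendsto_div_of_tendsto_div hLpos hLmono hv hc huv)
  rw [mul_one] at hprod
  refine hprod.congr' ?_
  filter_upwards [hv.eventually_gt_atTop 0, huv.eventually (lt_mem_nhds hc)] with i hvi hui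
  rw [Real.div_rpow ((div_pos_iff_of_pos_right hvi).1 hui).le hvi.le, mul_div_mul_comm]

end SlowlyVarying

theorem tendsto_natCast_div_div_natCast {d : ℕ} (hd : 0 < d) :
    Tendsto (fun n : ℕ => ((n / d : ℕ) : ℝ) / n) atTop (𝓝 (d : ℝ)⁻¹) := by
  have hd' : (0 : ℝ) < d := Nat.cast_pos.2 hd
  have hfloor := (tendsto_nat_floor_div_atTop.comp
    (tendsto_natCast_atTop_atTop.atTop_div_const hd')).mul_const (d : ℝ)⁻¹
  rw [one_mul] at hfloor
  refine hfloor.congr' ?_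
  filter_upwards [eventually_ne_atTop 0] with n hn
  simp only [Function.comp_apply, Nat.floor_div_eq_div]
  field_simp

theorem exists_abs_le_mul_of_tendsto_div {A g : ℕ → ℝ} {c : ℝ} (hg : ∀ n, 0 ≤ g n)
    (hA0 : ∀ n, g n = 0 → A n = 0) (hA : Tendsto (fun n => A n / g n) atTop (𝓝 c)) :
    ∃ C, 0 ≤ C ∧ ∀ n, |A n| ≤ C * g n := by
  obtain ⟨C, hC⟩ := hA.abs.bddAbove_range
  refine ⟨max C 0, le_max_right _ _, fun n => ?_⟩
  rcases (hg n).eq_or_lt with hgn | hgn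
  · simp [hA0 n hgn.symm, ← hgn]
  · calc |A n| = |A n / g n| * g n := by rw [abs_div, abs_of_pos hgn, div_mul_cancel₀ _ hgn.ne']
      _ ≤ max C 0 * g n := by
        gcongr
        exact (hC (Set.mem_range_self n)).trans (le_max_left _ _)

section RegularVariation

variable {A : ℕ → ℝ} {α : ℝ} {L : ℝ → ℝ}

theorem natCast_div_rpow_mul_le (hα : 0 ≤ α) (hLpos : ∀ x, 0 ≤ x → 0 < L x)
    (hLmono : MonotoneOn L (Set.Ici 0)) (n : ℕ) {d : ℕ} (hd : 0 < d) :
    ((n / d : ℕ) : ℝ) ^ α * L (n / d : ℕ) ≤ (n : ℝ) ^ α * L n / (d : ℝ) ^ α := by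
  have hdiv : ((n / d : ℕ) : ℝ) ≤ n := by exact_mod_cast Nat.div_le_self n d
  rw [mul_div_right_comm, ← Real.div_rpow n.cast_nonneg d.cast_nonneg]
  gcongr
  · exact (hLpos _ (Nat.cast_nonneg _)).le
  · exact Nat.cast_div_le
  · exact hLmono (Set.mem_Ici.2 (Nat.cast_nonneg _)) (Set.mem_Ici.2 n.cast_nonneg) hdiv

theorem tendsto_apply_div_div_apply (hL : SlowlyVarying L)
    (hLpos : ∀ x, 0 ≤ x → 0 < L x) (hLmono : MonotoneOn L (Set.Ici 0))
    (hA : Tendsto (fun n : ℕ => A n / ((n : ℝ) ^ α * L n)) atTop (𝓝 1)) {d : ℕ} (hd : 0 < d) :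
    Tendsto (fun n => A (n / d) / A n) atTop (𝓝 ((d : ℝ) ^ α)⁻¹) := by
  have hAg : A ~[atTop] fun n : ℕ => (n : ℝ) ^ α * L n := isEquivalent_of_tendsto_one hA
  have hquot := (hAg.comp_tendsto (Nat.tendsto_div_const_atTop hd.ne')).div hAg
  refine hquot.tendsto_nhds_iff.2 ?_
  rw [← Real.inv_rpow (Nat.cast_nonneg d)]
  exact hL.tendsto_rpow_mul_div hLpos hLmono α tendsto_natCast_atTop_atTop
    (inv_pos.2 (Nat.cast_pos.2 hd)) (tendsto_natCast_div_div_natCast hd)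

theorem exists_eventually_abs_apply_div_div_apply_le (hα : 0 ≤ α)
    (hLpos : ∀ x, 0 ≤ x → 0 < L x) (hLmono : MonotoneOn L (Set.Ici 0)) (hA0 : A 0 = 0)
    (hA : Tendsto (fun n : ℕ => A n / ((n : ℝ) ^ α * L n)) atTop (𝓝 1)) :
    ∃ C, ∀ᶠ n in atTop, ∀ d, 0 < d → |A (n / d) / A n| ≤ C / (d : ℝ) ^ α := by
  set g : ℕ → ℝ := fun n => (n : ℝ) ^ α * L n
  have hg_pos {n : ℕ} (hn : 0 < n) : 0 < g n := by
    have := hLpos n n.cast_nonneg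
    have : (0 : ℝ) < n := Nat.cast_pos.2 hn
    positivity
  obtain ⟨C, hC0, hC⟩ := exists_abs_le_mul_of_tendsto_div (A := A) (g := g)
    (fun n => by have := hLpos n n.cast_nonneg; positivity)
    (fun n hn => by rcases n.eq_zero_or_pos with rfl | h; exacts [hA0, absurd hn (hg_pos h).ne'])
    hA
  have hlower : ∀ᶠ n in atTop, 0 < g n ∧ g n / 2 ≤ A n := by
    filter_upwards [eventually_gt_atTop 0, hA.eventually (lt_mem_nhds one_half_lt_one)]
      with n hn hhalf
    refine ⟨hg_pos hn, ?_⟩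
    rw [lt_div_iff₀ (hg_pos hn)] at hhalf
    linarith
  refine ⟨2 * C, ?_⟩
  filter_upwards [hlower] with n ⟨hgn, hAn⟩ d hd
  calc |A (n / d) / A n| = |A (n / d)| / A n := by
        rw [abs_div, abs_of_pos (show 0 < A n by linarith)]
    _ ≤ C * (g n / (d : ℝ) ^ α) / (g n / 2) := by
        gcongr
        exact (hC _).trans (by gcongr; exact natCast_div_rpow_mul_le hα hLpos hLmono n hd)
    _ = 2 * C / (d : ℝ) ^ α := by field_simp

end RegularVariation

theorem dirichlet_convolution_summatory_limit_general
    (a : ℕ → ℝ) (α : ℝ) (hα : 0 < α)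
    (L : ℝ → ℝ) (hLpos : ∀ x : ℝ, 0 ≤ x → 0 < L x)
    (hLmono : MonotoneOn L (Set.Ici (0 : ℝ)))
    (hLslow : ∀ K : ℝ, 0 < K →
      Tendsto (fun x : ℝ => L (K * x) / L x) atTop (nhds 1))
    (hA : Tendsto (fun n : ℕ =>
        (∑ k ∈ Finset.Icc 1 n, a k) / ((n : ℝ) ^ α * L n)) atTop (nhds 1))
    (b : ℕ → ℝ)
    (hb : Summable (fun n : ℕ => |b (n + 1)| / ((n + 1 : ℝ)) ^ α)) :
    Tendsto (fun n : ℕ =>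
        (∑ k ∈ Finset.Icc 1 n, ∑ d ∈ k.divisors, b d * a (k / d)) /
          (∑ k ∈ Finset.Icc 1 n, a k))
      atTop (nhds (∑' m : ℕ, b (m + 1) / ((m + 1 : ℝ)) ^ α)) := by
  set A : ℕ → ℝ := fun m => ∑ k ∈ Icc 1 m, a k
  have hA0 : A 0 = 0 := by simp [A]
  have hsum (n : ℕ) : (∑ k ∈ Icc 1 n, ∑ d ∈ k.divisors, b d * a (k / d)) / A n =
      ∑' m : ℕ, b (m + 1) * (A (n / (m + 1)) / A n) := by
    rw [sum_Icc_sum_divisors_mul, sum_div, sum_Icc_eq_tsum_add_one]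
    · exact tsum_congr fun m => mul_div_assoc _ _ _
    · intro d hd
      simp [Nat.div_eq_of_lt hd]
  obtain ⟨C, hC⟩ := exists_eventually_abs_apply_div_div_apply_le hα.le hLpos hLmono hA0 hA
  refine (tendsto_tsum_of_dominated_convergence (hb.mul_left C) (fun m => ?_) ?_).congr
    fun n => (hsum n).symm
  · have hlim := (tendsto_apply_div_div_apply hLslow hLpos hLmono hA
      m.succ_pos).const_mul (b (m + 1))
    simpa [div_eq_mul_inv] using hlim
  · filter_upwards [hC] with n hn m
    calc ‖b (m + 1) * (A (n / (m + 1)) / A n)‖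
        ≤ |b (m + 1)| * (C / ((m + 1 : ℕ) : ℝ) ^ α) := by
          rw [norm_mul, Real.norm_eq_abs, Real.norm_eq_abs]
          exact mul_le_mul_of_nonneg_left (hn _ m.succ_pos) (abs_nonneg _)
      _ = C * (|b (m + 1)| / ((m + 1 : ℝ)) ^ α) := by push_cast; ring

/-- Wintner-type lemma: if `A(x) ~ x^α L(x)` with `L` positive, non-decreasing and slowly
varying, and `∑ |b(n)|/n^α < ∞`, then `(1/A(n)) ∑_{k ≤ n} (b*a)(k) → ∑ b(m)/m^α`. -/
theorem dirichlet_convolution_summatory_limit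
    (a : ℕ → ℝ) (ha : ∀ n, 0 ≤ a n) (α : ℝ) (hα : 0 < α)
    (L : ℝ → ℝ) (hLpos : ∀ x : ℝ, 0 ≤ x → 0 < L x)
    (hLmono : MonotoneOn L (Set.Ici (0 : ℝ)))
    (hLslow : ∀ K : ℝ, 0 < K →
      Tendsto (fun x : ℝ => L (K * x) / L x) atTop (nhds 1))
    (hA : Tendsto (fun n : ℕ =>
        (∑ k ∈ Finset.Icc 1 n, a k) / ((n : ℝ) ^ α * L n)) atTop (nhds 1))
    (b : ℕ → ℝ)
    (hb : Summable (fun n : ℕ => |b (n + 1)| / ((n + 1 : ℝ)) ^ α)) :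
    Tendsto (fun n : ℕ =>
        (∑ k ∈ Finset.Icc 1 n, ∑ d ∈ k.divisors, b d * a (k / d)) /
          (∑ k ∈ Finset.Icc 1 n, a k))
      atTop (nhds (∑' m : ℕ, b (m + 1) / ((m + 1 : ℝ)) ^ α)) :=
  dirichlet_convolution_summatory_limit_general a α hα L hLpos hLmono hLslow hA b hb
end

section
/- Let a : ℕ → [0,∞) be a nonnegative arithmetical function with summatory function A(x) = ∑_{n ≤ x} a(n), and assume A(n) ~ n^α / (log n)^β as n → ∞ for some α, β > 0. Let b : ℕ → ℝ be an arithmetical function with ∑_{n ≥ 2} |b(n)| (log n)^β / n^α < ∞. Then lim_{n→∞} (1/A(n)) ∑_{k=1}^n (b * a)(k) = ∑_{m=1}^∞ b(m)/m^α, where (b * a)(k) = ∑_{d | k} b(d) a(k/d) is the Dirichlet convolution. -/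
/-!
With `A` the summatory function of `a`, interchanging summations gives
`(1/A(n)) ∑_{k ≤ n} (b * a)(k) = ∑_d b(d) A(⌊n/d⌋) / A(n)`.
Since `n^α / (log n)^β` is regularly varying of index `α`, each ratio `A(⌊n/d⌋) / A(n)` tends
to `d^(-α)`. Comparing `A` on all of `ℕ` with the positive weight `m^α / (log (m + 2))^β` bounds
these ratios uniformly by a multiple of `(log d)^β / d^α`, so Tannery's theorem (dominated
convergence for series) lets the limit pass through the sum.
-/

open Filter Finset Asymptotics Topology

theorem sum_Icc_sum_divisors_mul_div {R : Type*} [Semiring R] (b c : ℕ → R) (n : ℕ) :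
    ∑ k ∈ Icc 1 n, ∑ d ∈ k.divisors, b d * c (k / d) =
      ∑ d ∈ Icc 1 n, b d * ∑ q ∈ Icc 1 (n / d), c q := by
  let f : ArithmeticFunction R := ⟨Function.update b 0 0, by simp⟩
  let g : ArithmeticFunction R := ⟨Function.update c 0 0, by simp⟩
  have hf {d : ℕ} (hd : 1 ≤ d) : f d = b d := Function.update_of_ne (by omega) _ _
  have hg {d : ℕ} (hd : 1 ≤ d) : g d = c d := Function.update_of_ne (by omega) _ _
  have key := ArithmeticFunction.sum_Ioc_mul_eq_sum_sum f g n
  simp only [ArithmeticFunction.mul_apply, Nat.sum_divisorsAntidiagonal (fun d q => f d * g q),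
    ← Icc_add_one_left_eq_Ioc, zero_add] at key
  convert key using 1
  · refine sum_congr rfl fun k _ => sum_congr rfl fun d hd => ?_
    rw [hf (Nat.pos_of_mem_divisors hd),
      hg (Nat.div_pos (Nat.divisor_le hd) (Nat.pos_of_mem_divisors hd))]
  · refine sum_congr rfl fun d hd => ?_
    rw [hf (mem_Icc.1 hd).1, sum_congr rfl fun q hq => hg (mem_Icc.1 hq).1]

theorem sum_Icc_sum_divisors_div_eq_tsum (b c : ℕ → ℝ) (n : ℕ) :
    (∑ k ∈ Icc 1 n, ∑ d ∈ k.divisors, b d * c (k / d)) / ∑ k ∈ Icc 1 n, c k =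
      ∑' j : ℕ, b (j + 1) * ((∑ k ∈ Icc 1 (n / (j + 1)), c k) / ∑ k ∈ Icc 1 n, c k) := by
  rw [sum_Icc_sum_divisors_mul_div, sum_div, tsum_eq_sum (s := range n)]
  · rw [← Ico_add_one_right_eq_Icc, sum_Ico_eq_sum_range]
    simp only [add_tsub_cancel_right, add_comm 1, mul_div_assoc]
  · intro j hj
    rw [Nat.div_eq_of_lt (by simpa using hj)]
    simp

theorem isEquivalent_natDiv {d : ℕ} (hd : 0 < d) :
    (fun n : ℕ => ((n / d : ℕ) : ℝ)) ~[atTop] fun n : ℕ => (n : ℝ) / d := by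
  simpa [Function.comp_def, Nat.floor_div_eq_div] using isEquivalent_nat_floor.comp_tendsto
    (tendsto_natCast_atTop_atTop.atTop_div_const (by positivity : (0 : ℝ) < d))

theorem isEquivalent_log_natDiv {d : ℕ} (hd : 0 < d) :
    (fun n : ℕ => Real.log (n / d : ℕ)) ~[atTop] fun n : ℕ => Real.log n := by
  have hlog : (fun n : ℕ => Real.log n - Real.log d) ~[atTop] fun n : ℕ => Real.log n :=
    IsEquivalent.refl.sub_isLittleO Real.isLittleO_const_log_atTop.natCast_atTop
  refine ((isEquivalent_natDiv hd).log ?_).trans (hlog.congr_left ?_)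
  · exact tendsto_natCast_atTop_atTop.atTop_div_const (by positivity)
  · filter_upwards [eventually_ne_atTop 0] with n hn
    rw [Real.log_div (by exact_mod_cast hn) (by positivity)]

theorem isEquivalent_rpow_div_log_rpow_natDiv (α β : ℝ) {d : ℕ} (hd : 0 < d) :
    (fun n : ℕ => ((n / d : ℕ) : ℝ) ^ α / Real.log (n / d : ℕ) ^ β) ~[atTop]
      fun n : ℕ => ((d : ℝ) ^ α)⁻¹ * ((n : ℝ) ^ α / Real.log n ^ β) := by
  have hpow := (isEquivalent_natDiv hd).rpow (fun n => by positivity) (r := α)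
  have hlog := (isEquivalent_log_natDiv hd).rpow (fun n => Real.log_natCast_nonneg n) (r := β)
  refine (hpow.div hlog).congr_right (Eventually.of_forall fun n => ?_)
  simp only [Pi.div_apply, Pi.pow_apply]
  rw [Real.div_rpow (by positivity) (by positivity)]
  ring

theorem eventually_rpow_div_log_rpow_pos (α β : ℝ) :
    ∀ᶠ n : ℕ in atTop, 0 < (n : ℝ) ^ α / Real.log n ^ β := by
  filter_upwards [eventually_ge_atTop 2] with n hn
  have : 0 < Real.log n := Real.log_pos (by exact_mod_cast hn)
  positivity

theorem tendsto_div_natDiv_of_isEquivalent {A : ℕ → ℝ} {α β : ℝ}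
    (hA : A ~[atTop] fun n : ℕ => (n : ℝ) ^ α / Real.log n ^ β) {d : ℕ} (hd : 0 < d) :
    Tendsto (fun n => A (n / d) / A n) atTop (𝓝 ((d : ℝ) ^ α)⁻¹) := by
  have key : (fun n => A (n / d)) ~[atTop] fun n => ((d : ℝ) ^ α)⁻¹ * A n :=
    ((hA.comp_tendsto (Nat.tendsto_div_const_atTop hd.ne')).trans
      (isEquivalent_rpow_div_log_rpow_natDiv α β hd)).trans (IsEquivalent.refl.mul hA.symm)
  refine ((key.div IsEquivalent.refl).congr_right ?_).tendsto_const
  filter_upwards [hA.eventually_pos (eventually_rpow_div_log_rpow_pos α β)] with n hn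
  simp [hn.ne']

theorem isEquivalent_log_natCast_add (c : ℝ) :
    (fun n : ℕ => Real.log (n + c)) ~[atTop] fun n : ℕ => Real.log n :=
  (IsEquivalent.refl.add_isLittleO (isLittleO_const_id_atTop c).natCast_atTop).log
    tendsto_natCast_atTop_atTop

/-- Unlike `n ^ α / log n ^ β`, this is positive at every `n ≥ 1` (also at `n = 1`, where
`log n = 0`), so a function vanishing at `0` and asymptotic to it is bounded by a multiple of it
on all of `ℕ`, not just eventually. -/
noncomputable def powLogWeight (α β : ℝ) (n : ℕ) : ℝ := (n : ℝ) ^ α / Real.log (n + 2) ^ β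

theorem log_natCast_add_two_pos (n : ℕ) : 0 < Real.log (n + 2) :=
  Real.log_pos (by linarith [(Nat.cast_nonneg n : (0 : ℝ) ≤ n)])

theorem powLogWeight_nonneg (α β : ℝ) (n : ℕ) : 0 ≤ powLogWeight α β n := by
  have := log_natCast_add_two_pos n
  unfold powLogWeight
  positivity

theorem powLogWeight_pos (α β : ℝ) {n : ℕ} (hn : 0 < n) : 0 < powLogWeight α β n := by
  have := log_natCast_add_two_pos n
  unfold powLogWeight
  positivity

theorem isEquivalent_powLogWeight (α β : ℝ) :
    (fun n : ℕ => (n : ℝ) ^ α / Real.log n ^ β) ~[atTop] powLogWeight α β :=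
  IsEquivalent.refl.div <| IsEquivalent.symm <|
    (isEquivalent_log_natCast_add 2).rpow fun n => Real.log_natCast_nonneg n

theorem log_natCast_add_two_le {n d : ℕ} (hd : 2 ≤ d) (hdn : d ≤ n) :
    Real.log (n + 2) ≤ 3 * Real.log d * Real.log ((n / d : ℕ) + 2) := by
  have hm : (1 : ℝ) ≤ (n / d : ℕ) := by exact_mod_cast (Nat.one_le_div_iff (by omega)).2 hdn
  have hn2 : (n : ℝ) + 2 ≤ ((n / d : ℕ) + 2) * d := by
    have := Nat.lt_div_mul_add (a := n) (b := d) (by omega)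
    have : n + 2 ≤ (n / d + 2) * d := by nlinarith
    exact_mod_cast this
  have hlogd : 1 / 2 < Real.log d := by
    have := Real.log_le_log (by norm_num) (by exact_mod_cast hd : (2 : ℝ) ≤ d)
    linarith [Real.log_two_gt_d9]
  have hlogm : 1 ≤ Real.log ((n / d : ℕ) + 2) := by
    rw [Real.le_log_iff_exp_le (by positivity)]
    exact Real.exp_one_lt_d9.le.trans (by norm_num; linarith)
  have : Real.log (n + 2) ≤ Real.log ((n / d : ℕ) + 2) + Real.log d := by
    rw [← Real.log_mul (by positivity) (by positivity)]
    exact Real.log_le_log (by positivity) hn2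
  nlinarith

theorem powLogWeight_natDiv_le {α β : ℝ} (hα : 0 ≤ α) (hβ : 0 ≤ β) {n d : ℕ}
    (hd : 2 ≤ d) (hdn : d ≤ n) :
    powLogWeight α β (n / d) ≤
      3 ^ β * (Real.log d ^ β / (d : ℝ) ^ α) * powLogWeight α β n := by
  unfold powLogWeight
  set m := n / d
  have hlogd : 0 ≤ Real.log d := Real.log_natCast_nonneg d
  have hpow : (m : ℝ) ^ α * (d : ℝ) ^ α ≤ (n : ℝ) ^ α := by
    rw [← Real.mul_rpow (by positivity) (by positivity)]
    exact Real.rpow_le_rpow (by positivity) (by exact_mod_cast Nat.div_mul_le_self n d) hα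
  have hlogpow :
      Real.log (n + 2) ^ β ≤ 3 ^ β * Real.log d ^ β * Real.log (m + 2) ^ β := by
    have := log_natCast_add_two_pos m
    rw [← Real.mul_rpow (by positivity) hlogd, ← Real.mul_rpow (by positivity) this.le]
    exact Real.rpow_le_rpow (log_natCast_add_two_pos n).le (log_natCast_add_two_le hd hdn) hβ
  have := log_natCast_add_two_pos n
  have := log_natCast_add_two_pos m
  rw [div_le_iff₀ (by positivity)]
  calc (m : ℝ) ^ α = (m : ℝ) ^ α * (d : ℝ) ^ α * Real.log (n + 2) ^ β /
        ((d : ℝ) ^ α * Real.log (n + 2) ^ β) := by field_simp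
    _ ≤ (n : ℝ) ^ α * (3 ^ β * Real.log d ^ β * Real.log (m + 2) ^ β) /
        ((d : ℝ) ^ α * Real.log (n + 2) ^ β) := by gcongr
    _ = _ := by field_simp

theorem exists_abs_le_mul_powLogWeight {A : ℕ → ℝ} {α β : ℝ} (hA0 : A 0 = 0)
    (hA : A ~[atTop] powLogWeight α β) :
    ∃ K, 0 ≤ K ∧ ∀ n, |A n| ≤ K * powLogWeight α β n := by
  have hvanish (n : ℕ) (hn : powLogWeight α β n = 0) : A n = 0 := by
    rcases Nat.eq_zero_or_pos n with rfl | hn0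
    · exact hA0
    · exact absurd hn (powLogWeight_pos α β hn0).ne'
  rw [← Nat.cofinite_eq_atTop] at hA
  obtain ⟨K, hK⟩ := (isBigO_cofinite_iff hvanish).1 hA.isBigO
  refine ⟨max K 0, le_max_right _ _, fun n => (hK n).trans ?_⟩
  rw [Real.norm_of_nonneg (powLogWeight_nonneg α β n)]
  exact mul_le_mul_of_nonneg_right (le_max_left _ _) (powLogWeight_nonneg α β n)

theorem exists_abs_div_natDiv_le {A : ℕ → ℝ} {α β : ℝ} (hα : 0 ≤ α) (hβ : 0 ≤ β)
    (hA0 : A 0 = 0) (hA : A ~[atTop] fun n : ℕ => (n : ℝ) ^ α / Real.log n ^ β) :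
    ∃ C, ∀ᶠ n in atTop, ∀ d, 2 ≤ d →
      |A (n / d) / A n| ≤ C * (Real.log d ^ β / (d : ℝ) ^ α) := by
  have hAv := hA.trans (isEquivalent_powLogWeight α β)
  obtain ⟨K, hK0, hK⟩ := exists_abs_le_mul_powLogWeight hA0 hAv
  obtain ⟨K', hK'0, hK'⟩ := hAv.isBigO_symm.exists_pos
  refine ⟨K * 3 ^ β * K', ?_⟩
  filter_upwards [hK'.bound, eventually_ge_atTop 1] with n hvn hn d hd
  rcases le_or_gt d n with hdn | hdn
  · rw [Real.norm_of_nonneg (powLogWeight_nonneg α β n), Real.norm_eq_abs] at hvn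
    have hAn : 0 < |A n| := by nlinarith [powLogWeight_pos α β hn]
    rw [abs_div, div_le_iff₀ hAn]
    calc |A (n / d)| ≤ K * powLogWeight α β (n / d) := hK _
      _ ≤ K * (3 ^ β * (Real.log d ^ β / (d : ℝ) ^ α) * (K' * |A n|)) := by
        gcongr
        exact (powLogWeight_natDiv_le hα hβ hd hdn).trans (by gcongr)
      _ = K * 3 ^ β * K' * (Real.log d ^ β / (d : ℝ) ^ α) * |A n| := by ring
  · have := Real.log_natCast_nonneg d
    rw [Nat.div_eq_of_lt hdn, hA0, zero_div, abs_zero]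
    positivity

theorem dirichlet_convolution_summatory_limit_log_general
    (a : ℕ → ℝ) (α β : ℝ) (hα : 0 < α) (hβ : 0 < β)
    (hA : Tendsto (fun n : ℕ =>
        (∑ k ∈ Finset.Icc 1 n, a k) / ((n : ℝ) ^ α / Real.log n ^ β)) atTop (nhds 1))
    (b : ℕ → ℝ)
    (hb : Summable (fun n : ℕ =>
        |b (n + 1)| * Real.log (n + 1) ^ β / ((n + 1 : ℝ)) ^ α)) :
    Tendsto (fun n : ℕ =>
        (∑ k ∈ Finset.Icc 1 n, ∑ d ∈ k.divisors, b d * a (k / d)) /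
          (∑ k ∈ Finset.Icc 1 n, a k))
      atTop (nhds (∑' m : ℕ, b (m + 1) / ((m + 1 : ℝ)) ^ α)) := by
  set A : ℕ → ℝ := fun n => ∑ k ∈ Icc 1 n, a k
  have hAw := isEquivalent_of_tendsto_one hA
  obtain ⟨C, hC⟩ := exists_abs_div_natDiv_le hα.le hβ.le (by simp) hAw
  have hlim (j : ℕ) : Tendsto (fun n => b (j + 1) * (A (n / (j + 1)) / A n)) atTop
      (𝓝 (b (j + 1) / ((j + 1 : ℝ)) ^ α)) := by
    simpa [div_eq_mul_inv] using
      (tendsto_div_natDiv_of_isEquivalent hAw j.succ_pos).const_mul (b (j + 1))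
  have hdom : ∀ᶠ n in atTop, ∀ j, ‖b (j + 1) * (A (n / (j + 1)) / A n)‖ ≤
      Function.update (fun j : ℕ => C * (|b (j + 1)| * Real.log (j + 1) ^ β / ((j + 1 : ℝ)) ^ α))
        0 |b 1| j := by
    filter_upwards [hC] with n hn j
    rcases j with _ | j
    · simpa [abs_div] using mul_le_mul_of_nonneg_left (div_self_le_one |A n|) (abs_nonneg (b 1))
    · rw [Function.update_of_ne j.succ_ne_zero, norm_mul, Real.norm_eq_abs, Nat.succ_eq_add_one]
      calc |b (j + 1 + 1)| * |A (n / (j + 1 + 1)) / A n|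
          ≤ |b (j + 1 + 1)| * (C * (Real.log (j + 2 : ℕ) ^ β / ((j + 2 : ℕ) : ℝ) ^ α)) :=
            mul_le_mul_of_nonneg_left (hn (j + 2) (by omega)) (abs_nonneg _)
        _ = _ := by push_cast; ring_nf
  simpa only [sum_Icc_sum_divisors_div_eq_tsum] using
    tendsto_tsum_of_dominated_convergence ((hb.mul_left C).update 0 _) hlim hdom

/-- Variant of the Wintner-type lemma: if `A(n) ~ n^α/(log n)^β` and
`∑ |b(n)| (log n)^β / n^α < ∞`, then `(1/A(n)) ∑_{k ≤ n} (b*a)(k) → ∑ b(m)/m^α`. -/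
theorem dirichlet_convolution_summatory_limit_log
    (a : ℕ → ℝ) (ha : ∀ n, 0 ≤ a n) (α β : ℝ) (hα : 0 < α) (hβ : 0 < β)
    (hA : Tendsto (fun n : ℕ =>
        (∑ k ∈ Finset.Icc 1 n, a k) / ((n : ℝ) ^ α / Real.log n ^ β)) atTop (nhds 1))
    (b : ℕ → ℝ)
    (hb : Summable (fun n : ℕ =>
        |b (n + 1)| * Real.log (n + 1) ^ β / ((n + 1 : ℝ)) ^ α)) :
    Tendsto (fun n : ℕ =>
        (∑ k ∈ Finset.Icc 1 n, ∑ d ∈ k.divisors, b d * a (k / d)) /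
          (∑ k ∈ Finset.Icc 1 n, a k))
      atTop (nhds (∑' m : ℕ, b (m + 1) / ((m + 1 : ℝ)) ^ α)) :=
  dirichlet_convolution_summatory_limit_log_general a α β hα hβ hA b hb
end

section
/- Let p > 1, let (X, 𝒜, ν) be a probability space and τ : X → X a measurable ν-preserving map. Let a : ℕ → [0,∞) be a nonnegative arithmetical function whose summatory function satisfies A(n) ~ n^α L(n) for some α > 0 and some positive, non-decreasing, slowly varying L, and let b : ℕ → ℝ satisfy ∑_{n ≥ 1} |b(n)|/n^α < ∞ and (a * b)(n) ≥ 0 for all n. Assume there is C > 0 such that for every integer ℓ ≥ 1 and every f ∈ L^p(ν), ‖ sup_{n ≥ 1} (1/A(n)) |∑_{k=1}^n a(k) · f∘τ^{ℓk}| ‖_{L^p(ν)} ≤ C ‖f‖_{L^p(ν)}. Then there exists C' > 0 such that for every f ∈ L^p(ν), ‖ sup_{n ≥ 1} (1/A(n)) |∑_{k=1}^n (a * b)(k) · f∘τ^k| ‖_{L^p(ν)} ≤ C' ‖f‖_{L^p(ν)}. -/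
/-!
Exchanging the order of summation,
`∑_{k ≤ n} (a * b)(k) f(τ^k x) = ∑_{d ≤ n} b(d) ∑_{m ≤ n/d} a(m) f(τ^{dm} x)`.
Since `A(n) ≍ n^α L(n)` with `L` non-decreasing, `A(n/d) ≤ K d^{-α} A(n)` uniformly in `d ≤ n`,
so the maximal function of `a * b` along `τ` is dominated pointwise by
`∑_d K |b(d)| d^{-α}` times the maximal function of `a` along `τ^d`.
Minkowski's inequality for this series and the maximal inequality along each `τ^d` give the
constant `K C ∑_d |b(d)| / d^α`.
-/

open MeasureTheory Filter Finset
open scoped ENNReal Topology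

section eLpNorm'

variable {X : Type*} [MeasurableSpace X] {μ : Measure X} {q : ℝ}

lemma eLpNorm'_iSup_eq_of_monotone {F : ℕ → X → ℝ≥0∞} (hF : ∀ n, AEMeasurable (F n) μ)
    (hmono : Monotone F) (hq : 0 < q) :
    eLpNorm' (fun x => ⨆ n, F n x) q μ = ⨆ n, eLpNorm' (F n) q μ := by
  have hpow (u : ℕ → ℝ≥0∞) {r : ℝ} (hr : 0 < r) : (⨆ n, u n) ^ r = ⨆ n, u n ^ r :=
    (ENNReal.orderIsoRpow r hr).map_iSup u
  simp only [eLpNorm'_eq_lintegral_enorm, enorm_eq_self]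
  rw [← hpow _ (one_div_pos.2 hq), ← lintegral_iSup' (fun n => (hF n).pow_const q)
    (ae_of_all _ fun x m n h => ENNReal.rpow_le_rpow (hmono h x) hq.le)]
  simp_rw [hpow _ hq]

lemma eLpNorm'_tsum_le {G : ℕ → X → ℝ≥0∞} (hG : ∀ i, AEMeasurable (G i) μ) (hq : 1 ≤ q) :
    eLpNorm' (fun x => ∑' i, G i x) q μ ≤ ∑' i, eLpNorm' (G i) q μ := by
  simp_rw [ENNReal.tsum_eq_iSup_nat]
  rw [eLpNorm'_iSup_eq_of_monotone (F := fun n x => ∑ i ∈ range n, G i x)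
    (fun n => Finset.aemeasurable_fun_sum _ fun i _ => hG i)
    (fun m n h x => Finset.sum_le_sum_of_subset (Finset.range_subset_range.2 h))
    (zero_lt_one.trans_le hq)]
  refine iSup_mono fun n => ?_
  rw [← Finset.sum_fn]
  exact eLpNorm'_sum_le (fun i _ => (hG i).aestronglyMeasurable) hq

lemma eLpNorm'_const_mul_of_ne_top {F : X → ℝ≥0∞} {r : ℝ≥0∞} (hr : r ≠ ∞) (hq : 0 < q) :
    eLpNorm' (fun x => r * F x) q μ = r * eLpNorm' F q μ := by
  simp only [eLpNorm'_eq_lintegral_enorm, enorm_eq_self,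
    ENNReal.mul_rpow_of_nonneg _ _ hq.le]
  rw [lintegral_const_mul' _ _ (ENNReal.rpow_ne_top_of_nonneg hq.le hr),
    ENNReal.mul_rpow_of_nonneg _ _ (one_div_pos.2 hq).le, ← ENNReal.rpow_mul,
    mul_one_div_cancel hq.ne', ENNReal.rpow_one]

end eLpNorm'

lemma sum_Icc_divisors_mul_eq_sum_mul_sum {R : Type*} [CommSemiring R] (a b g : ℕ → R) (n : ℕ) :
    ∑ k ∈ Icc 1 n, (∑ d ∈ k.divisors, a d * b (k / d)) * g k
      = ∑ e ∈ Icc 1 n, b e * ∑ m ∈ Icc 1 (n / e), a m * g (e * m) := by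
  simp only [Finset.sum_mul, Finset.mul_sum, Finset.sum_sigma']
  refine Finset.sum_nbij' (fun q => ⟨q.1 / q.2, q.2⟩) (fun q => ⟨q.2 * q.1, q.2⟩)
    ?_ ?_ ?_ ?_ ?_
  · rintro ⟨k, d⟩ h
    simp only [mem_sigma, mem_Icc, Nat.mem_divisors] at h ⊢
    obtain ⟨⟨hk1, hkn⟩, ⟨e, rfl⟩, -⟩ := h
    have hd : 0 < d := Nat.pos_of_mul_pos_right (by omega : 0 < d * e)
    have he : 0 < e := Nat.pos_of_mul_pos_left (by omega : 0 < d * e)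
    rw [Nat.mul_div_cancel_left e hd, Nat.le_div_iff_mul_le he]
    exact ⟨⟨he, (Nat.le_mul_of_pos_left e hd).trans hkn⟩, hd, hkn⟩
  · rintro ⟨e, m⟩ h
    simp only [mem_sigma, mem_Icc, Nat.mem_divisors] at h ⊢
    obtain ⟨⟨he1, -⟩, hm1, hmn⟩ := h
    rw [Nat.le_div_iff_mul_le he1] at hmn
    exact ⟨⟨Nat.mul_pos hm1 he1, by linarith⟩, dvd_mul_right m e, by positivity⟩
  · rintro ⟨k, d⟩ h
    simp only [mem_sigma, Nat.mem_divisors] at h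
    simp [Nat.mul_div_cancel' h.2.1]
  · rintro ⟨e, m⟩ h
    simp only [mem_sigma, mem_Icc] at h
    simp [Nat.mul_div_cancel_left e (by omega : 0 < m)]
  · rintro ⟨k, d⟩ h
    simp only [mem_sigma, Nat.mem_divisors] at h
    dsimp only
    rw [Nat.div_mul_cancel h.2.1]
    ring

lemma natCast_div_rpow_mul_mul_rpow_le {α : ℝ} (hα : 0 ≤ α) {L : ℝ → ℝ}
    (hLpos : ∀ x : ℝ, 0 ≤ x → 0 < L x) (hLmono : MonotoneOn L (Set.Ici 0)) (n d : ℕ) :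
    ((n / d : ℕ) : ℝ) ^ α * L (n / d : ℕ) * (d : ℝ) ^ α ≤ (n : ℝ) ^ α * L n := by
  have hdiv : ((n / d : ℕ) : ℝ) * d ≤ n := by exact_mod_cast Nat.div_mul_le_self n d
  have hL : L (n / d : ℕ) ≤ L n :=
    hLmono (Set.mem_Ici.2 (Nat.cast_nonneg _)) (Set.mem_Ici.2 (Nat.cast_nonneg _))
      (by exact_mod_cast Nat.div_le_self n d)
  calc ((n / d : ℕ) : ℝ) ^ α * L (n / d : ℕ) * (d : ℝ) ^ α
      = (((n / d : ℕ) : ℝ) * d) ^ α * L (n / d : ℕ) := by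
        rw [Real.mul_rpow (Nat.cast_nonneg _) (Nat.cast_nonneg _)]; ring
    _ ≤ (n : ℝ) ^ α * L n :=
        mul_le_mul (Real.rpow_le_rpow (by positivity) hdiv hα) hL
          (hLpos _ (Nat.cast_nonneg _)).le (by positivity)

lemma exists_mul_rpow_le_of_tendsto_div {A φ : ℕ → ℝ} {α c : ℝ} (hα : 0 ≤ α) (hc : 0 < c)
    (hAmono : Monotone A) (hA0 : ∀ n, 0 ≤ A n) (hφ : ∀ n, 1 ≤ n → 0 < φ n)
    (hφdiv : ∀ n d : ℕ, φ (n / d) * (d : ℝ) ^ α ≤ φ n)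
    (hlim : Tendsto (fun n => A n / φ n) atTop (𝓝 c)) :
    ∃ K, 0 ≤ K ∧ ∀ n d : ℕ, 1 ≤ d → d ≤ n → A (n / d) * (d : ℝ) ^ α ≤ K * A n := by
  obtain ⟨K₁, hK₁⟩ := hlim.bddAbove_range
  have hupper (m : ℕ) (hm : 1 ≤ m) : A m ≤ K₁ * φ m :=
    (div_le_iff₀ (hφ m hm)).1 (hK₁ ⟨m, rfl⟩)
  have hK₁0 : 0 ≤ K₁ := (div_nonneg (hA0 1) (hφ 1 le_rfl).le).trans (hK₁ ⟨1, rfl⟩)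
  obtain ⟨N, hN⟩ := eventually_atTop.1 (hlim.eventually (eventually_gt_nhds (half_lt_self hc)))
  have hNα : 0 ≤ (N : ℝ) ^ α := by positivity
  refine ⟨2 * K₁ / c + (N : ℝ) ^ α, by positivity, fun n d hd hdn => ?_⟩
  rcases le_or_gt N n with hNn | hnN
  · have hlower : c / 2 * φ n ≤ A n := ((lt_div_iff₀ (hφ n (hd.trans hdn))).1 (hN n hNn)).le
    calc A (n / d) * (d : ℝ) ^ α
        ≤ K₁ * φ (n / d) * (d : ℝ) ^ α := by
          gcongr; exact hupper _ ((Nat.one_le_div_iff hd).2 hdn)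
      _ ≤ K₁ * φ n := by rw [mul_assoc]; exact mul_le_mul_of_nonneg_left (hφdiv n d) hK₁0
      _ = 2 * K₁ / c * (c / 2 * φ n) := by field_simp
      _ ≤ 2 * K₁ / c * A n := by gcongr
      _ ≤ (2 * K₁ / c + (N : ℝ) ^ α) * A n := by nlinarith [hA0 n]
  · have hdN : (d : ℝ) ≤ N := by exact_mod_cast hdn.trans hnN.le
    calc A (n / d) * (d : ℝ) ^ α
        ≤ A n * (N : ℝ) ^ α := by
          gcongr
          · exact hA0 _
          · exact hAmono (Nat.div_le_self n d)
      _ ≤ (2 * K₁ / c + (N : ℝ) ^ α) * A n := by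
          have : 0 ≤ 2 * K₁ / c := by positivity
          nlinarith [hA0 n]

noncomputable def summatory (a : ℕ → ℝ) (n : ℕ) : ℝ := ∑ k ∈ Icc 1 n, a k

noncomputable def weightedMaximal (w A g : ℕ → ℝ) : ℝ≥0∞ :=
  ⨆ n : ℕ, ⨆ _ : 1 ≤ n, ENNReal.ofReal (|∑ k ∈ Icc 1 n, w k * g k| / A n)

lemma ofReal_le_weightedMaximal {w A g : ℕ → ℝ} {n : ℕ} (hn : 1 ≤ n) :
    ENNReal.ofReal (|∑ k ∈ Icc 1 n, w k * g k| / A n) ≤ weightedMaximal w A g :=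
  le_iSup₂_of_le n hn le_rfl

lemma aemeasurable_weightedMaximal {X : Type*} [MeasurableSpace X] {μ : Measure X}
    (w A : ℕ → ℝ) {g : X → ℕ → ℝ}
    (hg : ∀ k, AEMeasurable (fun x => g x k) μ) :
    AEMeasurable (fun x => weightedMaximal w A (g x)) μ := by
  unfold weightedMaximal
  refine AEMeasurable.iSup fun n => AEMeasurable.iSup fun _ => ?_
  exact ((Finset.aemeasurable_fun_sum _ fun k _ => (hg k).const_mul (w k)).abs.div_const _)
    |>.ennreal_ofReal

section summatory

variable {a : ℕ → ℝ}

lemma summatory_nonneg (ha : ∀ n, 0 ≤ a n) (n : ℕ) : 0 ≤ summatory a n :=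
  sum_nonneg fun k _ => ha k

lemma summatory_mono (ha : ∀ n, 0 ≤ a n) : Monotone (summatory a) := fun _ _ h =>
  sum_le_sum_of_subset_of_nonneg (Icc_subset_Icc_right h) fun k _ _ => ha k

lemma sum_Icc_mul_eq_zero_of_summatory_eq_zero (ha : ∀ n, 0 ≤ a n) {n : ℕ}
    (h : summatory a n = 0) (g : ℕ → ℝ) :
    ∑ k ∈ Icc 1 n, a k * g k = 0 :=
  sum_eq_zero fun k hk => by rw [(sum_eq_zero_iff_of_nonneg fun k _ => ha k).1 h k hk, zero_mul]

lemma abs_sum_divisors_mul_div_summatory_le (ha : ∀ n, 0 ≤ a n) {α K : ℝ}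
    (hK : ∀ n d : ℕ, 1 ≤ d → d ≤ n → summatory a (n / d) * (d : ℝ) ^ α ≤ K * summatory a n)
    (b g : ℕ → ℝ) (n : ℕ) :
    |∑ k ∈ Icc 1 n, (∑ d ∈ k.divisors, a d * b (k / d)) * g k| / summatory a n
      ≤ ∑ d ∈ Icc 1 n, K * |b d| / (d : ℝ) ^ α *
          (|∑ m ∈ Icc 1 (n / d), a m * g (d * m)| / summatory a (n / d)) := by
  rw [sum_Icc_divisors_mul_eq_sum_mul_sum]
  calc |∑ d ∈ Icc 1 n, b d * ∑ m ∈ Icc 1 (n / d), a m * g (d * m)| / summatory a n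
      ≤ ∑ d ∈ Icc 1 n, |b d| * |∑ m ∈ Icc 1 (n / d), a m * g (d * m)| / summatory a n := by
        rw [← sum_div]
        gcongr
        · exact summatory_nonneg ha n
        · exact (abs_sum_le_sum_abs _ _).trans_eq (sum_congr rfl fun d _ => abs_mul _ _)
    _ ≤ _ := by
        refine sum_le_sum fun d hd => ?_
        obtain ⟨hd1, hdn⟩ := mem_Icc.1 hd
        set S := |∑ m ∈ Icc 1 (n / d), a m * g (d * m)|
        rcases (summatory_nonneg ha (n / d)).eq_or_lt with h0 | hpos
        · simp [S, sum_Icc_mul_eq_zero_of_summatory_eq_zero ha h0.symm]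
        have hdα : 0 < (d : ℝ) ^ α := by positivity
        have hKd := hK n d hd1 hdn
        have hn : 0 < summatory a n := (summatory_nonneg ha n).lt_of_ne fun h => by
          rw [← h, mul_zero] at hKd
          exact hKd.not_gt (by positivity)
        rw [div_le_iff₀ hn]
        calc |b d| * S = |b d| * S * 1 := (mul_one _).symm
          _ ≤ |b d| * S * (K * summatory a n / ((d : ℝ) ^ α * summatory a (n / d))) := by
            gcongr
            rw [one_le_div (by positivity)]
            linarith
          _ = _ := by field_simp

lemma weightedMaximal_divisors_le (ha : ∀ n, 0 ≤ a n) {α K : ℝ} (hK0 : 0 ≤ K)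
    (hK : ∀ n d : ℕ, 1 ≤ d → d ≤ n → summatory a (n / d) * (d : ℝ) ^ α ≤ K * summatory a n)
    (b g : ℕ → ℝ) :
    weightedMaximal (fun k => ∑ d ∈ k.divisors, a d * b (k / d)) (summatory a) g
      ≤ ∑' d : ℕ, ENNReal.ofReal (K * |b (d + 1)| / ((d + 1 : ℕ) : ℝ) ^ α) *
          weightedMaximal a (summatory a) (fun m => g ((d + 1) * m)) := by
  refine iSup₂_le fun n hn => ?_
  set F : ℕ → ℝ≥0∞ := fun d => ENNReal.ofReal (K * |b d| / (d : ℝ) ^ α) *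
    weightedMaximal a (summatory a) (fun m => g (d * m))
  calc ENNReal.ofReal
        (|∑ k ∈ Icc 1 n, (∑ d ∈ k.divisors, a d * b (k / d)) * g k| / summatory a n)
      ≤ ∑ d ∈ Icc 1 n, ENNReal.ofReal (K * |b d| / (d : ℝ) ^ α) *
          ENNReal.ofReal (|∑ m ∈ Icc 1 (n / d), a m * g (d * m)| / summatory a (n / d)) := by
        refine (ENNReal.ofReal_le_ofReal
          (abs_sum_divisors_mul_div_summatory_le ha hK b g n)).trans ?_
        rw [ENNReal.ofReal_sum_of_nonneg fun d _ => ?_]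
        · exact (sum_congr rfl fun d _ => ENNReal.ofReal_mul (by positivity)).le
        · have := summatory_nonneg ha (n / d)
          positivity
    _ ≤ ∑ d ∈ Icc 1 n, F d := by
        refine sum_le_sum fun d hd => ?_
        obtain ⟨hd1, hdn⟩ := mem_Icc.1 hd
        dsimp only [F]
        gcongr
        exact ofReal_le_weightedMaximal ((Nat.one_le_div_iff hd1).2 hdn)
    _ = ∑ d ∈ range n, F (d + 1) := by
        rw [range_eq_Ico, sum_Ico_add' F 0 n 1, zero_add, Ico_add_one_right_eq_Icc]
    _ ≤ ∑' d, F (d + 1) := ENNReal.sum_le_tsum _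

end summatory

theorem dirichlet_convolution_dominated_ergodic_general (p : ℝ) (hp : 1 < p)
    {X : Type*} [MeasurableSpace X] (ν : Measure X)
    (τ : X → X) (hτ : MeasurePreserving τ ν ν)
    (a : ℕ → ℝ) (ha : ∀ n, 0 ≤ a n) (α : ℝ) (hα : 0 < α)
    (L : ℝ → ℝ) (hLpos : ∀ x : ℝ, 0 ≤ x → 0 < L x)
    (hLmono : MonotoneOn L (Set.Ici (0 : ℝ)))
    (hA : Tendsto (fun n : ℕ =>
        (∑ k ∈ Finset.Icc 1 n, a k) / ((n : ℝ) ^ α * L n)) atTop (nhds 1))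
    (b : ℕ → ℝ)
    (hb : Summable (fun n : ℕ => |b (n + 1)| / ((n + 1 : ℝ)) ^ α))
    (C : ℝ)
    (hmax : ∀ ℓ : ℕ, 1 ≤ ℓ → ∀ f : X → ℝ, MemLp f (ENNReal.ofReal p) ν →
      (∫⁻ x, (⨆ n : ℕ, ⨆ _ : 1 ≤ n,
          ENNReal.ofReal
            (|∑ k ∈ Finset.Icc 1 n, a k * f (τ^[ℓ * k] x)| /
              ∑ k ∈ Finset.Icc 1 n, a k)) ^ p ∂ν) ^ (1 / p)
        ≤ ENNReal.ofReal C * eLpNorm f (ENNReal.ofReal p) ν) :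
    ∃ C' : ℝ, 0 < C' ∧
      ∀ f : X → ℝ, MemLp f (ENNReal.ofReal p) ν →
        (∫⁻ x, (⨆ n : ℕ, ⨆ _ : 1 ≤ n,
            ENNReal.ofReal
              (|∑ k ∈ Finset.Icc 1 n,
                  (∑ d ∈ k.divisors, a d * b (k / d)) * f (τ^[k] x)| /
                ∑ k ∈ Finset.Icc 1 n, a k)) ^ p ∂ν) ^ (1 / p)
          ≤ ENNReal.ofReal C' * eLpNorm f (ENNReal.ofReal p) ν := by
  have hp0 : 0 < p := one_pos.trans hp
  have hφ (n : ℕ) (hn : 1 ≤ n) : 0 < (n : ℝ) ^ α * L n := by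
    have := hLpos n (Nat.cast_nonneg n)
    positivity
  obtain ⟨K, hK0, hK⟩ := exists_mul_rpow_le_of_tendsto_div hα.le one_pos (summatory_mono ha)
    (summatory_nonneg ha) hφ (natCast_div_rpow_mul_mul_rpow_le hα.le hLpos hLmono) hA
  set c : ℕ → ℝ := fun d => K * |b (d + 1)| / ((d + 1 : ℕ) : ℝ) ^ α
  have hc : Summable c := by simpa [c, mul_div_assoc] using hb.mul_left K
  refine ⟨max ((∑' d, c d) * C) 1, by positivity, fun f hf => ?_⟩
  have hfτ (ℓ k : ℕ) : AEMeasurable (fun x => f (τ^[ℓ * k] x)) ν :=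
    hf.1.aemeasurable.comp_quasiMeasurePreserving (hτ.iterate _).quasiMeasurePreserving
  -- For `F : X → ℝ≥0∞`, `(∫⁻ x, F x ^ p ∂ν) ^ (1 / p)` is `eLpNorm' F p ν` by definition.
  calc eLpNorm' (fun x => weightedMaximal (fun k => ∑ d ∈ k.divisors, a d * b (k / d))
          (summatory a) (fun k => f (τ^[k] x))) p ν
      ≤ eLpNorm' (fun x => ∑' d, ENNReal.ofReal (c d) *
          weightedMaximal a (summatory a) (fun m => f (τ^[(d + 1) * m] x))) p ν :=
        eLpNorm'_mono_enorm_ae hp0.le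
          (ae_of_all _ fun x => weightedMaximal_divisors_le ha hK0 hK b _)
    _ ≤ ∑' d, ENNReal.ofReal (c d) * eLpNorm' (fun x =>
          weightedMaximal a (summatory a) (fun m => f (τ^[(d + 1) * m] x))) p ν := by
        refine (eLpNorm'_tsum_le (fun d => ?_) hp.le).trans_eq ?_
        · exact (aemeasurable_weightedMaximal _ _ fun m => hfτ _ m).const_mul _
        · simp_rw [eLpNorm'_const_mul_of_ne_top ENNReal.ofReal_ne_top hp0]
    _ ≤ ∑' d, ENNReal.ofReal (c d) * (ENNReal.ofReal C * eLpNorm f (ENNReal.ofReal p) ν) := by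
        gcongr with d
        exact hmax (d + 1) (Nat.le_add_left 1 d) f hf
    _ = ENNReal.ofReal ((∑' d, c d) * C) * eLpNorm f (ENNReal.ofReal p) ν := by
        rw [ENNReal.tsum_mul_right, ← ENNReal.ofReal_tsum_of_nonneg (fun d => by positivity) hc,
          ← mul_assoc, ← ENNReal.ofReal_mul (tsum_nonneg fun d => by positivity)]
    _ ≤ _ := by gcongr; exact le_max_left _ _

/-- Stability of the dominated ergodic theorem under Dirichlet convolution: if the weights
`a(n)` satisfy a maximal inequality along every power `τ^ℓ` and `∑ |b(n)|/n^α < ∞` with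
`a*b ≥ 0`, then `a*b` satisfies the dominated ergodic theorem (normalized by `A(n)`). -/
theorem dirichlet_convolution_dominated_ergodic (p : ℝ) (hp : 1 < p)
    {X : Type*} [MeasurableSpace X] (ν : Measure X) [IsProbabilityMeasure ν]
    (τ : X → X) (hτ : MeasurePreserving τ ν ν)
    (a : ℕ → ℝ) (ha : ∀ n, 0 ≤ a n) (α : ℝ) (hα : 0 < α)
    (L : ℝ → ℝ) (hLpos : ∀ x : ℝ, 0 ≤ x → 0 < L x)
    (hLmono : MonotoneOn L (Set.Ici (0 : ℝ)))
    (hLslow : ∀ K : ℝ, 0 < K →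
      Tendsto (fun x : ℝ => L (K * x) / L x) atTop (nhds 1))
    (hA : Tendsto (fun n : ℕ =>
        (∑ k ∈ Finset.Icc 1 n, a k) / ((n : ℝ) ^ α * L n)) atTop (nhds 1))
    (b : ℕ → ℝ)
    (hb : Summable (fun n : ℕ => |b (n + 1)| / ((n + 1 : ℝ)) ^ α))
    (hab : ∀ n : ℕ, 0 ≤ ∑ d ∈ n.divisors, a d * b (n / d))
    (C : ℝ) (hC : 0 < C)
    (hmax : ∀ ℓ : ℕ, 1 ≤ ℓ → ∀ f : X → ℝ, MemLp f (ENNReal.ofReal p) ν →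
      (∫⁻ x, (⨆ n : ℕ, ⨆ _ : 1 ≤ n,
          ENNReal.ofReal
            (|∑ k ∈ Finset.Icc 1 n, a k * f (τ^[ℓ * k] x)| /
              ∑ k ∈ Finset.Icc 1 n, a k)) ^ p ∂ν) ^ (1 / p)
        ≤ ENNReal.ofReal C * eLpNorm f (ENNReal.ofReal p) ν) :
    ∃ C' : ℝ, 0 < C' ∧
      ∀ f : X → ℝ, MemLp f (ENNReal.ofReal p) ν →
        (∫⁻ x, (⨆ n : ℕ, ⨆ _ : 1 ≤ n,
            ENNReal.ofReal
              (|∑ k ∈ Finset.Icc 1 n,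
                  (∑ d ∈ k.divisors, a d * b (k / d)) * f (τ^[k] x)| /
                ∑ k ∈ Finset.Icc 1 n, a k)) ^ p ∂ν) ^ (1 / p)
          ≤ ENNReal.ofReal C' * eLpNorm f (ENNReal.ofReal p) ν :=
  dirichlet_convolution_dominated_ergodic_general p hp ν τ hτ a ha α hα L hLpos hLmono hA b hb C
    hmax
end

section
/- For every p > 1 and every function g : ℤ → ℝ with ∑_{i ∈ ℤ} |g(i)|^p < ∞, the two-sided Cesàro maximal inequality holds: ∑_{i ∈ ℤ} sup_{j ≥ i} ( (1/(j − i + 1)) |∑_{l=i}^{j} g(l)| )^p ≤ (p/(p−1))^p ∑_{i ∈ ℤ} |g(i)|^p. -/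
/-!
For `n : ℕ` let `M_n i = max_{i ≤ j ≤ i + n} avg_{[i, j]} |g|` be the truncated one-sided maximal
function. Garsia's telescoping proof of the maximal ergodic lemma, applied to the shift on `ℤ`
and to `|g| - t`, gives the refined weak-type bound `t · #{M_n > t} ≤ ∑_{M_n > t} |g|`. By the
layer-cake formula this yields `∑ M_n^p ≤ p/(p-1) · ∑ |g| M_n^(p-1)`, and Hölder's inequality
bounds the right side by `p/(p-1) · ‖g‖_p ‖M_n‖_p^(p-1)`. Since `‖M_n‖_p < ∞` (each window has at
most `n + 1` points), dividing gives `‖M_n‖_p ≤ p/(p-1) · ‖g‖_p`, and monotone convergence in `n`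
concludes.
-/

open Finset MeasureTheory
open scoped ENNReal

theorem Int.natCast_card_Icc_of_le {R : Type*} [AddGroupWithOne R] {a b : ℤ} (h : a ≤ b + 1) :
    ((#(Icc a b) : ℕ) : R) = b + 1 - a := by
  rw [← Int.cast_natCast, Int.card_Icc_of_le _ _ h, Int.cast_sub, Int.cast_add, Int.cast_one]

theorem Real.rpow_sum_div_card_le_sum_rpow {ι : Type*} {s : Finset ι} {f : ι → ℝ} {p : ℝ}
    (hf : ∀ i ∈ s, 0 ≤ f i) (hp : 1 ≤ p) : ((∑ i ∈ s, f i) / #s) ^ p ≤ ∑ i ∈ s, f i ^ p := by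
  rcases s.eq_empty_or_nonempty with rfl | hs
  · simp [Real.zero_rpow (by linarith : p ≠ 0)]
  have hcard : (1 : ℝ) ≤ #s := by exact_mod_cast hs.card_pos
  have jensen := Real.rpow_arith_mean_le_arith_mean_rpow s (fun _ => 1 / (#s : ℝ)) f
    (fun _ _ => by positivity) (by rw [sum_const, nsmul_eq_mul]; field_simp) hf hp
  rw [← mul_sum, ← mul_sum, one_div_mul_eq_div] at jensen
  exact jensen.trans (mul_le_of_le_one_left (sum_nonneg fun i hi => Real.rpow_nonneg (hf i hi) p)
    ((div_le_one (by positivity)).2 hcard))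

theorem tsum_sum_Icc_add_eq_mul_tsum (G : ℤ → ℝ≥0∞) (n : ℕ) :
    ∑' i : ℤ, ∑ l ∈ Icc i (i + n), G l = (n + 1) * ∑' l, G l := by
  have hshift : ∀ i : ℤ, ∑ l ∈ Icc i (i + n), G l = ∑ k ∈ Icc (0 : ℤ) n, G (i + k) := fun i => by
    have hmap := map_add_left_Icc (0 : ℤ) n i
    rw [add_zero] at hmap
    rw [← hmap, sum_map]
    rfl
  simp_rw [hshift]
  rw [Summable.tsum_finsetSum fun _ _ => ENNReal.summable]
  have hinv : ∀ k : ℤ, ∑' i, G (i + k) = ∑' l, G l := fun k => (Equiv.addRight k).tsum_eq G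
  simp [hinv, Int.card_Icc]

theorem ENNReal.tsum_iSup_eq_iSup_tsum {α : Type*} {f : ℕ → α → ℝ≥0∞} (hf : Monotone f) :
    ∑' a, ⨆ n, f n a = ⨆ n, ∑' a, f n a := by
  simp_rw [ENNReal.tsum_eq_iSup_sum, ENNReal.finsetSum_iSup_of_monotone fun a _ _ hmn => hf hmn a]
  exact iSup_comm

theorem ENNReal.le_rpow_of_le_mul_rpow {S c : ℝ≥0∞} {p q : ℝ} (hpq : p.HolderConjugate q)
    (hS : S ≠ ∞) (h : S ≤ c * S ^ (1 / q)) : S ≤ c ^ p := by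
  rcases eq_or_ne S 0 with rfl | hS0
  · exact zero_le
  have hsplit : S ^ (1 / p) * S ^ (1 / q) = S := by
    rw [← ENNReal.rpow_add _ _ hS0 hS, one_div, one_div, hpq.inv_add_inv_eq_one, ENNReal.rpow_one]
  have hroot : S ^ (1 / p) ≤ c := by
    refine (ENNReal.mul_le_mul_iff_left ?_ ?_).1 (hsplit.trans_le h)
    · exact (ENNReal.rpow_pos (pos_iff_ne_zero.2 hS0) hS).ne'
    · exact ENNReal.rpow_ne_top_of_nonneg (by simp [hpq.symm.nonneg]) hS
  calc S = (S ^ (1 / p)) ^ p := by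
        rw [← ENNReal.rpow_mul, one_div_mul_cancel hpq.ne_zero, ENNReal.rpow_one]
    _ ≤ c ^ p := ENNReal.rpow_le_rpow hroot hpq.nonneg

namespace MeasureTheory

variable {α : Type*} [MeasurableSpace α] {μ : Measure α} {f : α → ℝ} {G : α → ℝ≥0∞} {p : ℝ}

theorem lintegral_rpow_le_mul_lintegral_mul_rpow_sub_one (hf : 0 ≤ f) (hfm : Measurable f)
    (hG : Measurable G) (hp : 1 < p)
    (hweak : ∀ t > 0, ENNReal.ofReal t * μ {a | t < f a} ≤ ∫⁻ a in {a | t < f a}, G a ∂μ) :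
    ∫⁻ a, ENNReal.ofReal (f a ^ p) ∂μ
      ≤ ENNReal.ofReal (p / (p - 1)) * ∫⁻ a, G a * ENNReal.ofReal (f a ^ (p - 1)) ∂μ := by
  -- Layer cake for `μ` with exponent `p`, then for `μ.withDensity G` with exponent `p - 1`.
  set ν := μ.withDensity G
  have hp1 : 0 < p - 1 := by linarith
  have hweak' : ∀ t > 0, μ {a | t < f a} * ENNReal.ofReal (t ^ (p - 1))
      ≤ ν {a | t < f a} * ENNReal.ofReal (t ^ (p - 1 - 1)) := fun t ht => by
    have hsplit : ENNReal.ofReal (t ^ (p - 1))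
        = ENNReal.ofReal t * ENNReal.ofReal (t ^ (p - 1 - 1)) := by
      rw [← ENNReal.ofReal_mul ht.le, Real.rpow_sub_one ht.ne' (p - 1), mul_div_cancel₀ _ ht.ne']
    rw [withDensity_apply G (measurableSet_lt measurable_const hfm), hsplit, ← mul_assoc,
      mul_comm (μ _)]
    gcongr
    exact hweak t ht
  calc ∫⁻ a, ENNReal.ofReal (f a ^ p) ∂μ
      = ENNReal.ofReal p * ∫⁻ t in Set.Ioi 0, μ {a | t < f a} * ENNReal.ofReal (t ^ (p - 1)) :=
        lintegral_rpow_eq_lintegral_meas_lt_mul μ (ae_of_all _ hf) hfm.aemeasurable (by linarith)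
    _ ≤ ENNReal.ofReal p
          * ∫⁻ t in Set.Ioi 0, ν {a | t < f a} * ENNReal.ofReal (t ^ (p - 1 - 1)) := by
        gcongr ENNReal.ofReal p * ?_
        exact setLIntegral_mono' measurableSet_Ioi hweak'
    _ = ENNReal.ofReal (p / (p - 1)) * ∫⁻ a, ENNReal.ofReal (f a ^ (p - 1)) ∂ν := by
        rw [lintegral_rpow_eq_lintegral_meas_lt_mul ν (ae_of_all _ hf) hfm.aemeasurable hp1,
          ← mul_assoc, ← ENNReal.ofReal_mul (by positivity), div_mul_cancel₀ _ hp1.ne']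
    _ = _ := by
        rw [lintegral_withDensity_eq_lintegral_mul _ hG (by fun_prop)]
        rfl

theorem lintegral_rpow_le_of_mul_meas_lt_le (hf : 0 ≤ f) (hfm : Measurable f)
    (hG : Measurable G) (hp : 1 < p) (hfin : ∫⁻ a, ENNReal.ofReal (f a ^ p) ∂μ ≠ ∞)
    (hweak : ∀ t > 0, ENNReal.ofReal t * μ {a | t < f a} ≤ ∫⁻ a in {a | t < f a}, G a ∂μ) :
    ∫⁻ a, ENNReal.ofReal (f a ^ p) ∂μ ≤ ENNReal.ofReal ((p / (p - 1)) ^ p) * ∫⁻ a, G a ^ p ∂μ := by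
  set q := p / (p - 1)
  have hpq : p.HolderConjugate q := .conjExponent hp
  have hq : 0 ≤ q := hpq.symm.nonneg
  have hpow : ∀ a, ENNReal.ofReal (f a ^ (p - 1)) ^ q = ENNReal.ofReal (f a ^ p) := fun a => by
    rw [ENNReal.ofReal_rpow_of_nonneg (Real.rpow_nonneg (hf a) _) hq, ← Real.rpow_mul (hf a)]
    congr 2
    exact mul_div_cancel₀ p (sub_ne_zero.2 hp.ne')
  have holder := ENNReal.lintegral_mul_le_Lp_mul_Lq μ hpq hG.aemeasurable
    (hfm.pow_const (p - 1)).ennreal_ofReal.aemeasurable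
  simp only [Pi.mul_apply, hpow] at holder
  have hbound := (lintegral_rpow_le_mul_lintegral_mul_rpow_sub_one hf hfm hG hp hweak).trans
    (mul_le_mul_right holder _)
  rw [← mul_assoc] at hbound
  calc _ ≤ (ENNReal.ofReal q * (∫⁻ a, G a ^ p ∂μ) ^ (1 / p)) ^ p :=
        ENNReal.le_rpow_of_le_mul_rpow hpq hfin hbound
    _ = _ := by
        rw [ENNReal.mul_rpow_of_nonneg _ _ hpq.nonneg, ← ENNReal.rpow_mul,
          one_div_mul_cancel hpq.ne_zero, ENNReal.rpow_one,
          ENNReal.ofReal_rpow_of_nonneg hq hpq.nonneg]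

end MeasureTheory

/-- Garsia's `M_n⁺ h`: the `0` is the sum over the empty window. -/
noncomputable def maxPartialSum (h : ℤ → ℝ) (n : ℕ) (i : ℤ) : ℝ :=
  max 0 ((Icc i (i + n)).sup' (nonempty_Icc.2 (by omega)) fun j => ∑ l ∈ Icc i j, h l)

section MaxPartialSum

variable {h : ℤ → ℝ} {n : ℕ} {i : ℤ}

theorem maxPartialSum_nonneg : 0 ≤ maxPartialSum h n i := le_max_left _ _

theorem sum_Icc_le_maxPartialSum {j : ℤ} (hj : j ≤ i + n) :
    ∑ l ∈ Icc i j, h l ≤ maxPartialSum h n i := by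
  rcases lt_or_ge j i with hji | hij
  · simpa [Icc_eq_empty_of_lt hji] using maxPartialSum_nonneg
  · exact le_max_of_le_right (le_sup' (fun j => ∑ l ∈ Icc i j, h l) (mem_Icc.2 ⟨hij, hj⟩))

theorem maxPartialSum_le_add (hpos : 0 < maxPartialSum h n i) :
    maxPartialSum h n i ≤ h i + maxPartialSum h n (i + 1) := by
  obtain ⟨j, hj, hjmax⟩ := exists_mem_eq_sup' (nonempty_Icc.2 (by omega : i ≤ i + n))
    fun j => ∑ l ∈ Icc i j, h l
  have hij := (mem_Icc.1 hj)
  rw [maxPartialSum, hjmax] at hpos ⊢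
  rw [max_eq_right (lt_max_iff.1 hpos |>.resolve_left (lt_irrefl 0)).le,
    ← add_sum_Ioc_eq_sum_Icc hij.1, ← Icc_add_one_left_eq_Ioc]
  gcongr
  exact sum_Icc_le_maxPartialSum (by omega)

theorem maxPartialSum_eq_zero (hh : ∀ l ≥ i, h l ≤ 0) : maxPartialSum h n i = 0 :=
  max_eq_left (sup'_le _ _ fun _ _ => sum_nonpos fun l hl => hh l (mem_Icc.1 hl).1)

theorem maxPartialSum_sub_le_sum_filter {A C : ℤ} (hAC : A ≤ C) :
    maxPartialSum h n A - maxPartialSum h n C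
      ≤ ∑ i ∈ Ico A C with 0 < maxPartialSum h n i, h i := by
  induction C, hAC using Int.leInduction with
  | base => simp
  | succ C hAC ih =>
    have hstep : maxPartialSum h n C - maxPartialSum h n (C + 1)
        ≤ if 0 < maxPartialSum h n C then h C else 0 := by
      split_ifs with hpos
      · linarith [maxPartialSum_le_add hpos]
      · linarith [maxPartialSum_nonneg (h := h) (n := n) (i := C + 1)]
    rw [sum_filter, ← sum_Ico_add_eq_sum_Ico_add_one hAC, ← sum_filter]
    linarith

theorem maximal_ergodic_Ico {A C : ℤ} (hh : ∀ l ≥ C, h l ≤ 0) :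
    0 ≤ ∑ i ∈ Ico A C with 0 < maxPartialSum h n i, h i := by
  rcases le_or_gt A C with hAC | hCA
  · have htel := maxPartialSum_sub_le_sum_filter (h := h) (n := n) hAC
    rw [maxPartialSum_eq_zero hh] at htel
    linarith [maxPartialSum_nonneg (h := h) (n := n) (i := A)]
  · simp [Ico_eq_empty_of_le hCA.le]

end MaxPartialSum

noncomputable def truncMaxAvg (g : ℤ → ℝ) (n : ℕ) (i : ℤ) : ℝ :=
  (Icc i (i + n)).sup' (nonempty_Icc.2 (by omega)) fun j => (∑ l ∈ Icc i j, g l) / ((j : ℝ) - i + 1)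

section TruncMaxAvg

variable {g : ℤ → ℝ} {n : ℕ} {i : ℤ} {t p : ℝ}

theorem le_truncMaxAvg {j : ℤ} (hij : i ≤ j) (hj : j ≤ i + n) :
    (∑ l ∈ Icc i j, g l) / ((j : ℝ) - i + 1) ≤ truncMaxAvg g n i :=
  le_sup' (fun j => (∑ l ∈ Icc i j, g l) / ((j : ℝ) - i + 1)) (mem_Icc.2 ⟨hij, hj⟩)

theorem self_le_truncMaxAvg : g i ≤ truncMaxAvg g n i := by
  simpa using le_truncMaxAvg (g := g) (n := n) le_rfl (by omega)

theorem truncMaxAvg_mono : Monotone fun n => truncMaxAvg g n i := fun _ _ hmn =>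
  sup'_mono _ (Icc_subset_Icc_right (by omega)) _

theorem lt_truncMaxAvg_iff : t < truncMaxAvg g n i ↔ 0 < maxPartialSum (fun l => g l - t) n i := by
  rw [truncMaxAvg, lt_sup'_iff, maxPartialSum, lt_max_iff, lt_sup'_iff, or_iff_right (lt_irrefl 0)]
  refine exists_congr fun j => and_congr_right fun hj => ?_
  have hij : (i : ℝ) ≤ j := by exact_mod_cast (mem_Icc.1 hj).1
  have hcard := Int.natCast_card_Icc_of_le (R := ℝ) (by linarith [(mem_Icc.1 hj).1] : i ≤ j + 1)
  rw [lt_div_iff₀ (by linarith), sum_sub_distrib, sum_const, nsmul_eq_mul, hcard, sub_pos]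
  ring_nf

theorem truncMaxAvg_le_of_forall_le (hg : ∀ l ≥ i, g l ≤ t) : truncMaxAvg g n i ≤ t := by
  rw [← not_lt, lt_truncMaxAvg_iff, maxPartialSum_eq_zero fun l hl => sub_nonpos.2 (hg l hl)]
  exact lt_irrefl 0

theorem mul_card_filter_lt_truncMaxAvg_le {A C : ℤ} (hC : ∀ l ≥ C, g l ≤ t) :
    t * #{i ∈ Ico A C | t < truncMaxAvg g n i} ≤ ∑ i ∈ Ico A C with t < truncMaxAvg g n i, g i := by
  have hergodic := maximal_ergodic_Ico (h := fun l => g l - t) (n := n) (A := A)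
    fun l hl => sub_nonpos.2 (hC l hl)
  simp only [← lt_truncMaxAvg_iff, sum_sub_distrib, sum_const, nsmul_eq_mul] at hergodic
  linarith

theorem truncMaxAvg_rpow_le (hg : ∀ l, 0 ≤ g l) (hp : 1 ≤ p) :
    truncMaxAvg g n i ^ p ≤ ∑ l ∈ Icc i (i + n), g l ^ p := by
  obtain ⟨j, hj, hjmax⟩ := exists_mem_eq_sup' (nonempty_Icc.2 (by omega : i ≤ i + n))
    fun j => (∑ l ∈ Icc i j, g l) / ((j : ℝ) - i + 1)
  have hij := mem_Icc.1 hj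
  rw [truncMaxAvg, hjmax, ← add_sub_right_comm, ← Int.natCast_card_Icc_of_le (by omega)]
  calc _ ≤ ∑ l ∈ Icc i j, g l ^ p := Real.rpow_sum_div_card_le_sum_rpow (fun l _ => hg l) hp
    _ ≤ _ := sum_le_sum_of_subset_of_nonneg (Icc_subset_Icc_right hij.2)
        fun l _ _ => Real.rpow_nonneg (hg l) p

theorem truncMaxAvg_nonneg (hg : ∀ l, 0 ≤ g l) : 0 ≤ truncMaxAvg g n i :=
  (hg i).trans self_le_truncMaxAvg

theorem mul_count_lt_truncMaxAvg_le_of_forall_ge {C : ℤ} (hg : ∀ l, 0 ≤ g l) (ht : 0 ≤ t)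
    (hC : ∀ l ≥ C, g l ≤ t) :
    ENNReal.ofReal t * Measure.count {i | t < truncMaxAvg g n i}
      ≤ ∫⁻ i in {i | t < truncMaxAvg g n i}, ENNReal.ofReal (g i) ∂Measure.count := by
  set E := {i | t < truncMaxAvg g n i}
  have hE : ∀ i ∈ E, i < C := fun i hi => by
    by_contra! hCi
    exact (truncMaxAvg_le_of_forall_le fun l hl => hC l (hCi.trans hl)).not_gt hi
  rw [← lintegral_indicator_const .of_discrete, ← lintegral_indicator .of_discrete, lintegral_count,
    lintegral_count, ENNReal.tsum_eq_iSup_sum]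
  refine iSup_le fun s => ?_
  obtain ⟨A, hA⟩ := s.bddBelow
  calc ∑ i ∈ s, E.indicator (fun _ => ENNReal.ofReal t) i
      = ∑ i ∈ s with i ∈ E, ENNReal.ofReal t := sum_indicator_eq_sum_filter _ _ _ _
    _ ≤ ∑ i ∈ Ico A C with i ∈ E, ENNReal.ofReal t :=
        sum_le_sum_of_subset fun i hi => by
          rw [mem_filter] at hi ⊢
          exact ⟨mem_Ico.2 ⟨hA hi.1, hE i hi.2⟩, hi.2⟩
    _ = ENNReal.ofReal (t * #{i ∈ Ico A C | t < truncMaxAvg g n i}) := by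
        rw [sum_const, nsmul_eq_mul, ENNReal.ofReal_mul ht, ENNReal.ofReal_natCast, mul_comm]
        rfl
    _ ≤ ENNReal.ofReal (∑ i ∈ Ico A C with t < truncMaxAvg g n i, g i) :=
        ENNReal.ofReal_le_ofReal (mul_card_filter_lt_truncMaxAvg_le hC)
    _ = ∑ i ∈ Ico A C, E.indicator (fun i => ENNReal.ofReal (g i)) i := by
        rw [ENNReal.ofReal_sum_of_nonneg fun i _ => hg i, sum_indicator_eq_sum_filter]
        rfl
    _ ≤ _ := ENNReal.sum_le_tsum _

theorem mul_count_lt_truncMaxAvg_le (hg : ∀ l, 0 ≤ g l) (ht : 0 < t) :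
    ENNReal.ofReal t * Measure.count {i | t < truncMaxAvg g n i}
      ≤ ∫⁻ i in {i | t < truncMaxAvg g n i}, ENNReal.ofReal (g i) ∂Measure.count := by
  by_cases hfin : {l | t < g l}.Finite
  · obtain ⟨C, hC⟩ := hfin.bddAbove
    refine mul_count_lt_truncMaxAvg_le_of_forall_ge hg ht.le (C := C + 1) fun l hl => ?_
    by_contra! hlt
    have hlC := hC hlt
    omega
  · -- `g > t` infinitely often, so both sides are infinite.
    calc _ ≤ ∞ := le_top
      _ = ∫⁻ l in {l | t < g l}, ENNReal.ofReal t ∂Measure.count := by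
        rw [setLIntegral_const, Measure.count_apply_infinite hfin, ENNReal.mul_top (by simpa)]
      _ ≤ ∫⁻ l in {l | t < g l}, ENNReal.ofReal (g l) ∂Measure.count :=
        setLIntegral_mono' .of_discrete fun l hl => ENNReal.ofReal_le_ofReal hl.le
      _ ≤ _ := lintegral_mono_set fun l hl => hl.trans_le self_le_truncMaxAvg

theorem tsum_truncMaxAvg_rpow_le_mul (hg : ∀ l, 0 ≤ g l) (hp : 1 ≤ p) :
    ∑' i, ENNReal.ofReal (truncMaxAvg g n i ^ p) ≤ (n + 1) * ∑' i, ENNReal.ofReal (g i ^ p) := by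
  calc ∑' i, ENNReal.ofReal (truncMaxAvg g n i ^ p)
      ≤ ∑' i : ℤ, ∑ l ∈ Icc i (i + n), ENNReal.ofReal (g l ^ p) := by
        refine ENNReal.tsum_le_tsum fun i => ?_
        rw [← ENNReal.ofReal_sum_of_nonneg fun l _ => Real.rpow_nonneg (hg l) p]
        exact ENNReal.ofReal_le_ofReal (truncMaxAvg_rpow_le hg hp)
    _ = _ := tsum_sum_Icc_add_eq_mul_tsum _ n

theorem tsum_truncMaxAvg_rpow_le (hg : ∀ l, 0 ≤ g l) (hp : 1 < p)
    (hgp : ∑' i, ENNReal.ofReal (g i ^ p) ≠ ∞) :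
    ∑' i, ENNReal.ofReal (truncMaxAvg g n i ^ p)
      ≤ ENNReal.ofReal ((p / (p - 1)) ^ p) * ∑' i, ENNReal.ofReal (g i ^ p) := by
  have hfin : ∑' i, ENNReal.ofReal (truncMaxAvg g n i ^ p) ≠ ∞ :=
    ne_top_of_le_ne_top (ENNReal.mul_ne_top (by simp) hgp) (tsum_truncMaxAvg_rpow_le_mul hg hp.le)
  have hLp := lintegral_rpow_le_of_mul_meas_lt_le (μ := Measure.count)
    (fun _ => truncMaxAvg_nonneg hg) .of_discrete (G := fun i => ENNReal.ofReal (g i)) .of_discrete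
    hp (by rwa [lintegral_count]) fun t ht => mul_count_lt_truncMaxAvg_le hg ht
  simpa only [lintegral_count, ENNReal.ofReal_rpow_of_nonneg (hg _) (by linarith : 0 ≤ p)]
    using hLp

end TruncMaxAvg

theorem abs_avg_le_truncMaxAvg_abs (g : ℤ → ℝ) {i j : ℤ} (hij : i ≤ j) :
    (1 / ((j : ℝ) - i + 1)) * |∑ l ∈ Icc i j, g l|
      ≤ truncMaxAvg (fun l => |g l|) (j - i).toNat i := by
  have hN : (0 : ℝ) < (j : ℝ) - i + 1 := by
    have : (i : ℝ) ≤ j := by exact_mod_cast hij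
    linarith
  rw [one_div_mul_eq_div]
  calc _ ≤ (∑ l ∈ Icc i j, |g l|) / ((j : ℝ) - i + 1) := by gcongr; exact abs_sum_le_sum_abs _ _
    _ ≤ _ := le_truncMaxAvg hij (by omega)

/-- Two-sided Cesàro maximal inequality on `ℤ` (Hardy–Littlewood):
`∑_{i ∈ ℤ} sup_{j ≥ i} ((1/(j−i+1)) |∑_{l=i}^j g(l)|)^p ≤ (p/(p−1))^p ∑_{i ∈ ℤ} |g(i)|^p`. -/
theorem cesaro_maximal_inequality_int (p : ℝ) (hp : 1 < p)
    (g : ℤ → ℝ) (hg : Summable (fun i : ℤ => |g i| ^ p)) :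
    ∑' i : ℤ, (⨆ j : ℤ, ⨆ _ : i ≤ j,
        ENNReal.ofReal ((1 / ((j : ℝ) - i + 1)) * |∑ l ∈ Finset.Icc i j, g l|)) ^ p
      ≤ ENNReal.ofReal ((p / (p - 1)) ^ p * ∑' i : ℤ, |g i| ^ p) := by
  have hp0 : 0 < p := by linarith
  set M : ℕ → ℤ → ℝ := truncMaxAvg fun l => |g l|
  have hM : ∀ n i, 0 ≤ M n i := fun _ _ => truncMaxAvg_nonneg fun l => abs_nonneg (g l)
  have hmono : Monotone fun n i => ENNReal.ofReal (M n i ^ p) := fun m n hmn i =>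
    ENNReal.ofReal_le_ofReal (Real.rpow_le_rpow (hM m i) (truncMaxAvg_mono hmn) hp0.le)
  have hgp : ∑' i, ENNReal.ofReal (|g i| ^ p) = ENNReal.ofReal (∑' i, |g i| ^ p) :=
    (ENNReal.ofReal_tsum_of_nonneg (fun i => by positivity) hg).symm
  calc _ ≤ ∑' i, (⨆ n, ENNReal.ofReal (M n i)) ^ p := by
        refine ENNReal.tsum_le_tsum fun i => ENNReal.rpow_le_rpow (iSup₂_le fun j hij => ?_) hp0.le
        exact le_iSup_of_le (j - i).toNat
          (ENNReal.ofReal_le_ofReal (abs_avg_le_truncMaxAvg_abs g hij))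
    _ = ∑' i, ⨆ n, ENNReal.ofReal (M n i ^ p) := by
        congr 1 with i
        simp_rw [← ENNReal.ofReal_rpow_of_nonneg (hM _ i) hp0.le]
        exact (ENNReal.orderIsoRpow p hp0).map_iSup _
    _ = ⨆ n, ∑' i, ENNReal.ofReal (M n i ^ p) := ENNReal.tsum_iSup_eq_iSup_tsum hmono
    _ ≤ ENNReal.ofReal ((p / (p - 1)) ^ p) * ∑' i, ENNReal.ofReal (|g i| ^ p) :=
        iSup_le fun n => tsum_truncMaxAvg_rpow_le (fun l => abs_nonneg (g l)) hp
          (by rw [hgp]; exact ENNReal.ofReal_ne_top)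
    _ = _ := by rw [hgp, ← ENNReal.ofReal_mul (by positivity)]
end
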